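/- arXiv:1811.04267 — 5 statements merged into one kernel-verified Lean document; each statement's English description precedes it below -/
import Mathlib

section
/- Let {P_t} be a conservative Markovian semigroup with kernel measures p_t(x,dy) on (X,μ). Let 1 ≤ q ≤ p < ∞, α ≥ 0, and f ∈ L^p(X,μ) with Besov seminorm ‖f‖_{p,α} := sup_{t>0} t^{-α}(∫_X P_t(|f - f(y)|^p)(y) dμ(y))^{1/p} finite. Then |f|^{p/q} has finite (q,α)-seminorm and ‖|f|^{p/q}‖_{q,α} ≤ 2^{1/q} (p/q) ‖f‖_{L^p}^{(p/q)-1} ‖f‖_{p,α}. -/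
open MeasureTheory Set Filter ENNReal

/-- The heat-semigroup Besov seminorm
`‖f‖_{p,α} = sup_{t>0} t^{-α} (∫∫ |f(x)-f(y)|^p p_t(y,dx) dμ(y))^{1/p}`,
valued in `ℝ≥0∞`, for a family of heat kernel measures `κ t y = p_t(y, dx)`. -/
noncomputable def besov {X : Type*} [MeasurableSpace X] (μ : Measure X)
    (κ : ℝ → X → Measure X) (p α : ℝ) (f : X → ℝ) : ℝ≥0∞ :=
  ⨆ t : Ioi (0 : ℝ), (ENNReal.ofReal t.1) ^ (-α) *
    (∫⁻ y, ∫⁻ x, (ENNReal.ofReal |f x - f y|) ^ p ∂(κ t.1 y) ∂μ) ^ (1 / p)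

namespace Stmt4Aux

lemma L1 {x y r : ℝ} (hy : 0 ≤ y) (hxy : y ≤ x) (hr : 1 ≤ r) :
    x ^ r - y ^ r ≤ r * x ^ (r - 1) * (x - y) := by
  have hx : 0 ≤ x := hy.trans hxy
  rcases eq_or_lt_of_le hx with h0 | h0
  · have hy0 : y = 0 := le_antisymm (h0 ▸ hxy) hy
    have hr0 : r ≠ 0 := by linarith
    simp [← h0, hy0, Real.zero_rpow hr0]
  · have hs : -1 ≤ y / x - 1 := by
      have : 0 ≤ y / x := div_nonneg hy h0.le
      linarith
    have hbern := one_add_mul_self_le_rpow_one_add hs hr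
    have h1 : 1 + (y / x - 1) = y / x := by ring
    rw [h1, Real.div_rpow hy h0.le] at hbern
    have hxr : 0 < x ^ r := Real.rpow_pos_of_pos h0 r
    have hmul := mul_le_mul_of_nonneg_right hbern hxr.le
    rw [div_mul_cancel₀ _ hxr.ne'] at hmul
    have hx1 : x ^ r = x ^ (r - 1) * x := by
      rw [show r = (r - 1) + 1 by ring, Real.rpow_add h0, Real.rpow_one]; ring_nf
    have expand : (1 + r * (y / x - 1)) * x ^ r = x ^ r + r * x ^ (r - 1) * (y - x) := by
      rw [hx1]; field_simp
    rw [expand] at hmul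
    linarith

lemma L2 {x y r : ℝ} (hy : 0 ≤ y) (hx : 0 ≤ x) (hr : 1 ≤ r) :
    |x ^ r - y ^ r| ≤ r * (max x y) ^ (r - 1) * |x - y| := by
  rcases le_total y x with h | h
  · rw [abs_of_nonneg (sub_nonneg.2 (Real.rpow_le_rpow hy h (by linarith))),
      abs_of_nonneg (sub_nonneg.2 h), max_eq_left h]
    exact L1 hy h hr
  · rw [abs_sub_comm, abs_sub_comm x y,
      abs_of_nonneg (sub_nonneg.2 (Real.rpow_le_rpow hx h (by linarith))),
      abs_of_nonneg (sub_nonneg.2 h), max_eq_right h]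
    exact L1 hx h hr

lemma L3 {p q : ℝ} (hq : 1 ≤ q) (hpq : q ≤ p) (a b : ℝ) :
    |(|a|) ^ (p / q) - (|b|) ^ (p / q)| ^ q ≤
      (p / q) ^ q * ((|a| ^ (p - q) + |b| ^ (p - q)) * |a - b| ^ q) := by
  have hq0 : 0 < q := by linarith
  set r := p / q with hrdef
  have hr : 1 ≤ r := (one_le_div hq0).2 hpq
  have hmaxnn : 0 ≤ max |a| |b| := le_trans (abs_nonneg a) (le_max_left _ _)
  have h2 : |(|a|) ^ r - (|b|) ^ r| ≤ r * (max |a| |b|) ^ (r - 1) * |a - b| := by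
    refine (L2 (abs_nonneg b) (abs_nonneg a) hr).trans ?_
    have hcoef : 0 ≤ r * (max |a| |b|) ^ (r - 1) :=
      mul_nonneg (by linarith) (Real.rpow_nonneg hmaxnn _)
    exact mul_le_mul_of_nonneg_left (abs_abs_sub_abs_le_abs_sub a b) hcoef
  have h3 := Real.rpow_le_rpow (abs_nonneg _) h2 hq0.le
  refine h3.trans ?_
  have hrw : (r * (max |a| |b|) ^ (r - 1) * |a - b|) ^ q =
      r ^ q * ((max |a| |b|) ^ (p - q) * |a - b| ^ q) := by
    rw [Real.mul_rpow (mul_nonneg (by linarith) (Real.rpow_nonneg hmaxnn _)) (abs_nonneg _),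
      Real.mul_rpow (by linarith) (Real.rpow_nonneg hmaxnn _),
      ← Real.rpow_mul hmaxnn]
    have : (r - 1) * q = p - q := by rw [hrdef, sub_mul, div_mul_cancel₀ _ hq0.ne', one_mul]
    rw [this, mul_assoc]
  rw [hrw]
  refine mul_le_mul_of_nonneg_left ?_ (Real.rpow_nonneg (by positivity) q)
  refine mul_le_mul_of_nonneg_right ?_ (Real.rpow_nonneg (abs_nonneg _) q)
  rcases max_choice |a| |b| with h | h <;> rw [h]
  · exact le_add_of_nonneg_right (Real.rpow_nonneg (abs_nonneg _) _)
  · exact le_add_of_nonneg_left (Real.rpow_nonneg (abs_nonneg _) _)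

lemma L4 {p q : ℝ} (hq : 1 ≤ q) (hpq : q ≤ p) (a b : ℝ) :
    (ENNReal.ofReal |(|a|) ^ (p / q) - (|b|) ^ (p / q)|) ^ q ≤
      ENNReal.ofReal ((p / q) ^ q) *
        (((ENNReal.ofReal |a|) ^ (p - q) + (ENNReal.ofReal |b|) ^ (p - q)) *
          (ENNReal.ofReal |a - b|) ^ q) := by
  have hq0 : (0:ℝ) ≤ q := by linarith
  have hpq0 : (0:ℝ) ≤ p - q := by linarith
  rw [ENNReal.ofReal_rpow_of_nonneg (abs_nonneg _) hq0,
    ENNReal.ofReal_rpow_of_nonneg (abs_nonneg a) hpq0,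
    ENNReal.ofReal_rpow_of_nonneg (abs_nonneg b) hpq0,
    ENNReal.ofReal_rpow_of_nonneg (abs_nonneg (a - b)) hq0,
    ← ENNReal.ofReal_add (Real.rpow_nonneg (abs_nonneg a) _) (Real.rpow_nonneg (abs_nonneg b) _),
    ← ENNReal.ofReal_mul (by positivity),
    ← ENNReal.ofReal_mul (Real.rpow_nonneg (div_nonneg (by linarith) (by linarith)) q)]
  exact ENNReal.ofReal_le_ofReal (L3 hq hpq a b)

lemma L5 {r s : ℝ} (hrs : Real.HolderConjugate r s) (D : ℝ≥0∞) (hD0 : D ≠ 0) (hDt : D ≠ ⊤)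
    (A B : ℝ≥0∞) :
    A * B ≤ (D ^ r * (ENNReal.ofReal r)⁻¹) * A ^ r + (D ^ s * ENNReal.ofReal s)⁻¹ * B ^ s := by
  have h1 : A * B = (D * A) * (B / D) := by
    have : (D * A) * (B / D) = (D / D) * (A * B) := by
      rw [div_eq_mul_inv, div_eq_mul_inv]; ring
    rw [this, ENNReal.div_self hD0 hDt, one_mul]
  rw [h1]
  refine (ENNReal.young_inequality (D * A) (B / D) hrs).trans (le_of_eq ?_)
  rw [ENNReal.mul_rpow_of_nonneg _ _ hrs.nonneg, ENNReal.div_rpow_of_nonneg _ _ hrs.symm.nonneg]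
  rw [div_eq_mul_inv, div_eq_mul_inv, div_eq_mul_inv]
  rw [ENNReal.mul_inv (Or.inl (by simp [ENNReal.rpow_eq_zero_iff, hD0, hDt, hrs.symm.pos]))
    (Or.inl (by simp [ENNReal.rpow_eq_top_iff, hD0, hDt, hrs.symm.pos]))]
  ring

lemma Lconj {p q : ℝ} (hq : 1 ≤ q) (hqp : q < p) :
    Real.HolderConjugate (p / (p - q)) (p / q) := by
  have hq0 : (0:ℝ) < q := by linarith
  have hp0 : (0:ℝ) < p := by linarith
  have hpq0 : (0:ℝ) < p - q := by linarith
  rw [Real.holderConjugate_iff]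
  constructor
  · rw [lt_div_iff₀ hpq0]; linarith
  · rw [inv_div, inv_div]; field_simp; ring

lemma L7 {p q : ℝ} (hq : 1 ≤ q) (hqp : q < p) (D : ℝ≥0∞) (hD0 : D ≠ 0) (hDt : D ≠ ⊤) (a b : ℝ) :
    (ENNReal.ofReal |(|a|) ^ (p / q) - (|b|) ^ (p / q)|) ^ q ≤
      ENNReal.ofReal ((p / q) ^ q) *
        ((D ^ (p / (p - q)) * (ENNReal.ofReal (p / (p - q)))⁻¹) * (ENNReal.ofReal |a|) ^ p
          + ((D ^ (p / (p - q)) * (ENNReal.ofReal (p / (p - q)))⁻¹) * (ENNReal.ofReal |b|) ^ p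
            + (2 * (D ^ (p / q) * ENNReal.ofReal (p / q))⁻¹) * (ENNReal.ofReal |a - b|) ^ p)) := by
  have hq0 : (0:ℝ) < q := by linarith
  have hpq0 : (0:ℝ) < p - q := by linarith
  refine (L4 hq hqp.le a b).trans (mul_le_mul_right ?_ _)
  set r := p / (p - q)
  set s := p / q
  have hconj : Real.HolderConjugate r s := Lconj hq hqp
  have key : ∀ z : ℝ, ((ENNReal.ofReal |z|) ^ (p - q)) ^ r = (ENNReal.ofReal |z|) ^ p := by
    intro z
    rw [← ENNReal.rpow_mul]
    congr 1
    show (p - q) * (p / (p - q)) = p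
    field_simp
  have key2 : ((ENNReal.ofReal |a - b|) ^ q) ^ s = (ENNReal.ofReal |a - b|) ^ p := by
    rw [← ENNReal.rpow_mul]
    congr 1
    show q * (p / q) = p
    field_simp
  rw [add_mul]
  have h1 := L5 hconj D hD0 hDt ((ENNReal.ofReal |a|) ^ (p - q)) ((ENNReal.ofReal |a - b|) ^ q)
  have h2 := L5 hconj D hD0 hDt ((ENNReal.ofReal |b|) ^ (p - q)) ((ENNReal.ofReal |a - b|) ^ q)
  rw [key a, key2] at h1
  rw [key b, key2] at h2
  refine (add_le_add h1 h2).trans (le_of_eq ?_)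
  ring

lemma Lker {X : Type*} [MeasurableSpace X] (μ : Measure X) (κ : ℝ → X → Measure X)
    (t : ℝ)
    (hκ : ∀ x, IsProbabilityMeasure (κ t x))
    (hsym : ∀ g : X → X → ℝ≥0∞, Measurable (Function.uncurry g) →
        ∫⁻ y, ∫⁻ x, g x y ∂(κ t y) ∂μ = ∫⁻ x, ∫⁻ y, g x y ∂(κ t x) ∂μ)
    (u : X → ℝ≥0∞) (hu : Measurable u)
    (h : X → X → ℝ≥0∞) (hh : Measurable (Function.uncurry h)) (hsh : ∀ x y, h x y = h y x)
    (a b : ℝ≥0∞) (hb : b ≠ ⊤) :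
    ∫⁻ y, ∫⁻ x, (a * u x + (a * u y + b * h x y)) ∂(κ t y) ∂μ
      = (a * ∫⁻ x, u x ∂μ) + ((a * ∫⁻ x, u x ∂μ)
          + b * ∫⁻ y, ∫⁻ x, h x y ∂(κ t y) ∂μ) := by
  have hmh : ∀ x, Measurable fun y => h x y := fun x => hh.comp measurable_prodMk_left
  have hΨ : Measurable (Function.uncurry fun x y => a * u x + (a * u y + b * h x y)) := by
    apply Measurable.add
    · exact (hu.comp measurable_fst).const_mul a
    · exact ((hu.comp measurable_snd).const_mul a).add (hh.const_mul b)
  have hg₂ : Measurable (Function.uncurry fun x y => a * u x + b * h x y) := by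
    apply Measurable.add
    · exact (hu.comp measurable_fst).const_mul a
    · exact hh.const_mul b
  rw [hsym _ hΨ]
  have step2 : ∀ x, ∫⁻ y, (a * u x + (a * u y + b * h x y)) ∂(κ t x)
      = a * u x + ∫⁻ y, (a * u y + b * h x y) ∂(κ t x) := by
    intro x
    rw [lintegral_add_left measurable_const, lintegral_const, measure_univ, mul_one]
  rw [lintegral_congr step2]
  rw [lintegral_add_left (hu.const_mul a), lintegral_const_mul a hu]
  congr 1
  have hR : ∀ x, ∫⁻ y, (a * u y + b * h x y) ∂(κ t x)
      = ∫⁻ y, (a * u y + b * h y x) ∂(κ t x) := by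
    intro x
    exact lintegral_congr fun y => by rw [hsh x y]
  rw [lintegral_congr hR]
  rw [hsym (fun x y => a * u x + b * h x y) hg₂]
  have step3 : ∀ x, ∫⁻ y, (a * u x + b * h x y) ∂(κ t x)
      = a * u x + b * ∫⁻ y, h x y ∂(κ t x) := by
    intro x
    rw [lintegral_add_left measurable_const, lintegral_const, measure_univ, mul_one,
      lintegral_const_mul b (hmh x)]
  rw [lintegral_congr step3, lintegral_add_left (hu.const_mul a), lintegral_const_mul a hu,
    lintegral_const_mul' b _ hb, ← hsym h hh]

lemma LoptR {r s x y : ℝ} (hr : 1 < r) (hs : 1 < s) (hrs : 1/r + 1/s = 1)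
    (hx : 0 < x) (hy : 0 < y) :
    ((y/x) ^ (1/(r*s))) ^ r * r⁻¹ * x + (((y/x) ^ (1/(r*s))) ^ s * s)⁻¹ * y
      = x ^ (1/r) * y ^ (1/s) := by
  have hr0 : (0:ℝ) < r := by linarith
  have hs0 : (0:ℝ) < s := by linarith
  have hyx : (0:ℝ) ≤ y / x := by positivity
  have hd1 : ((y/x) ^ (1/(r*s))) ^ r = (y/x) ^ (1/s) := by
    rw [← Real.rpow_mul hyx]
    congr 1
    field_simp
  have hd2 : ((y/x) ^ (1/(r*s))) ^ s = (y/x) ^ (1/r) := by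
    rw [← Real.rpow_mul hyx]
    congr 1
    field_simp
  rw [hd1, hd2, Real.div_rpow hy.le hx.le, Real.div_rpow hy.le hx.le]
  set A := x ^ (1/r) with hA
  set B := x ^ (1/s) with hB
  set C := y ^ (1/r) with hC
  set E := y ^ (1/s) with hE
  have hX1 : (0:ℝ) < A := Real.rpow_pos_of_pos hx _
  have hX2 : (0:ℝ) < B := Real.rpow_pos_of_pos hx _
  have hY1 : (0:ℝ) < C := Real.rpow_pos_of_pos hy _
  have hY2 : (0:ℝ) < E := Real.rpow_pos_of_pos hy _
  have hxeq : x = A * B := by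
    rw [hA, hB, ← Real.rpow_add hx, hrs, Real.rpow_one]
  have hyeq : y = C * E := by
    rw [hC, hE, ← Real.rpow_add hy, hrs, Real.rpow_one]
  rw [hxeq, hyeq]
  have hrs' : s + r = r * s := by field_simp at hrs; linarith
  field_simp
  ring_nf
  nlinarith [hrs', mul_pos hX1 hY2, mul_pos hX2 hY1,
    mul_pos (mul_pos hX1 hY2) (mul_pos hX2 hY1)]

lemma Lopt {r s : ℝ} (hr : 1 < r) (hs : 1 < s) (hrs : 1/r + 1/s = 1) (Xv Y : ℝ≥0∞)
    (hX0 : Xv ≠ 0) (hXt : Xv ≠ ⊤) (hY0 : Y ≠ 0) (hYt : Y ≠ ⊤) :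
    ∃ D : ℝ≥0∞, D ≠ 0 ∧ D ≠ ⊤ ∧
      (D ^ r * (ENNReal.ofReal r)⁻¹) * Xv + (D ^ s * ENNReal.ofReal s)⁻¹ * Y
        = Xv ^ (1/r) * Y ^ (1/s) := by
  have hr0 : (0:ℝ) < r := by linarith
  have hs0 : (0:ℝ) < s := by linarith
  set x := Xv.toReal with hxdef
  set y := Y.toReal with hydef
  have hx : 0 < x := ENNReal.toReal_pos hX0 hXt
  have hy : 0 < y := ENNReal.toReal_pos hY0 hYt
  set d : ℝ := (y/x) ^ (1/(r*s)) with hddef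
  have hd : 0 < d := Real.rpow_pos_of_pos (by positivity) _
  refine ⟨ENNReal.ofReal d, ?_, ENNReal.ofReal_ne_top, ?_⟩
  · simp [ENNReal.ofReal_eq_zero, not_le, hd]
  · have hDr : (ENNReal.ofReal d) ^ r = ENNReal.ofReal (d ^ r) :=
      ENNReal.ofReal_rpow_of_nonneg hd.le hr0.le
    have hDs : (ENNReal.ofReal d) ^ s = ENNReal.ofReal (d ^ s) :=
      ENNReal.ofReal_rpow_of_nonneg hd.le hs0.le
    have hXv : Xv = ENNReal.ofReal x := by rw [hxdef, ENNReal.ofReal_toReal hXt]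
    have hYv : Y = ENNReal.ofReal y := by rw [hydef, ENNReal.ofReal_toReal hYt]
    rw [hDr, hDs, hXv, hYv]
    rw [← ENNReal.ofReal_inv_of_pos hr0]
    rw [← ENNReal.ofReal_mul (by positivity), ← ENNReal.ofReal_mul (by positivity),
      ← ENNReal.ofReal_mul (by positivity)]
    rw [← ENNReal.ofReal_inv_of_pos (by positivity), ← ENNReal.ofReal_mul (by positivity),
      ← ENNReal.ofReal_add (by positivity) (by positivity)]
    rw [ENNReal.ofReal_rpow_of_nonneg hx.le (by positivity),
      ENNReal.ofReal_rpow_of_nonneg hy.le (by positivity),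
      ← ENNReal.ofReal_mul (by positivity)]
    exact congrArg ENNReal.ofReal (LoptR hr hs hrs hx hy)

lemma Lzero {r : ℝ} (hr : 0 < r) (K : ℝ≥0∞) (hK : K ≠ ⊤) (Z : ℝ≥0∞)
    (hb : ∀ D : ℝ≥0∞, D ≠ 0 → D ≠ ⊤ → Z ≤ K * D ^ r) : Z = 0 := by
  by_cases hK0 : K = 0
  · have := hb 1 one_ne_zero one_ne_top
    simpa [hK0] using this
  · refine le_antisymm ?_ zero_le
    refine ENNReal.le_of_forall_pos_le_add fun ε hε _ => ?_
    rw [zero_add]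
    have hdiv0 : (ε : ℝ≥0∞) / K ≠ 0 := by
      simp [ENNReal.div_eq_zero_iff, hK, hε.ne']
    have hdivt : (ε : ℝ≥0∞) / K ≠ ⊤ := by
      simp [ENNReal.div_eq_top, hK0, hK]
    have hD0 : ((ε : ℝ≥0∞) / K) ^ (1/r) ≠ 0 := by
      simp [ENNReal.rpow_eq_zero_iff, hdiv0, hdivt, hr, not_lt.2 (by positivity : (0:ℝ) ≤ 1/r)]
    have hDt : ((ε : ℝ≥0∞) / K) ^ (1/r) ≠ ⊤ := by
      simp [ENNReal.rpow_eq_top_iff, hdiv0, hdivt, hr, not_lt.2 (by positivity : (0:ℝ) ≤ 1/r)]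
    refine (hb _ hD0 hDt).trans (le_of_eq ?_)
    rw [← ENNReal.rpow_mul, one_div_mul_cancel hr.ne', ENNReal.rpow_one,
      ENNReal.mul_div_cancel hK0 hK]

end Stmt4Aux

open Stmt4Aux in
/-- If 1 ≤ q ≤ p < ∞, α ≥ 0 and f ∈ L^p has finite Besov (p,α)-seminorm, then |f|^{p/q}
has finite (q,α)-seminorm and
‖|f|^{p/q}‖_{q,α} ≤ 2^{1/q} (p/q) ‖f‖_{L^p}^{(p/q)-1} ‖f‖_{p,α}. -/
theorem stmt4 {X : Type*} [MeasurableSpace X] (μ : Measure X)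
    (κ : ℝ → X → Measure X) (p q α : ℝ) (hq : 1 ≤ q) (hpq : q ≤ p) (hα : 0 ≤ α)
    (hκ : ∀ t x, 0 < t → IsProbabilityMeasure (κ t x))
    (hsym : ∀ t, 0 < t → ∀ g : X → X → ℝ≥0∞, Measurable (Function.uncurry g) →
        ∫⁻ y, ∫⁻ x, g x y ∂(κ t y) ∂μ = ∫⁻ x, ∫⁻ y, g x y ∂(κ t x) ∂μ)
    (f : X → ℝ) (hf : Measurable f)
    (hfLp : ∫⁻ x, (ENNReal.ofReal |f x|) ^ p ∂μ ≠ ⊤)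
    (hfB : besov μ κ p α f ≠ ⊤) :
    besov μ κ q α (fun x => |f x| ^ (p / q)) ≠ ⊤ ∧
    besov μ κ q α (fun x => |f x| ^ (p / q)) ≤
      ENNReal.ofReal (2 ^ (1 / q) * (p / q)) *
        (∫⁻ x, (ENNReal.ofReal |f x|) ^ p ∂μ) ^ ((p / q - 1) / p) *
        besov μ κ p α f := by
  have hq0 : (0:ℝ) < q := by linarith
  have hp0 : (0:ℝ) < p := by linarith
  have hrpmeas : ∀ c : ℝ, Measurable fun z : ℝ≥0∞ => z ^ c := fun c => by measurability
  have hu : Measurable fun x => (ENNReal.ofReal |f x|) ^ p :=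
    (hrpmeas p).comp hf.abs.ennreal_ofReal
  have hexp0 : (0:ℝ) ≤ (p / q - 1) / p :=
    div_nonneg (by
      have := (one_le_div hq0).2 hpq
      linarith) hp0.le
  have hRHS_ne : ENNReal.ofReal (2 ^ (1 / q) * (p / q)) *
      (∫⁻ x, (ENNReal.ofReal |f x|) ^ p ∂μ) ^ ((p / q - 1) / p) * besov μ κ p α f ≠ ⊤ :=
    ENNReal.mul_ne_top (ENNReal.mul_ne_top ENNReal.ofReal_ne_top
      (ENNReal.rpow_ne_top_of_nonneg hexp0 hfLp)) hfB
  suffices key : besov μ κ q α (fun x => |f x| ^ (p / q)) ≤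
      ENNReal.ofReal (2 ^ (1 / q) * (p / q)) *
        (∫⁻ x, (ENNReal.ofReal |f x|) ^ p ∂μ) ^ ((p / q - 1) / p) * besov μ κ p α f by
    exact ⟨ne_top_of_le_ne_top hRHS_ne key, key⟩
  by_cases hX0 : (∫⁻ x, (ENNReal.ofReal |f x|) ^ p ∂μ) = 0
  -- degenerate case: f = 0 a.e.
  · have hf0 : ∀ᵐ x ∂μ, f x = 0 := by
      have h := (lintegral_eq_zero_iff hu).mp hX0
      filter_upwards [h] with x hx
      rw [Pi.zero_apply, ENNReal.rpow_eq_zero_iff] at hx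
      rcases hx with ⟨h0, _⟩ | ⟨h0, _⟩
      · have := ENNReal.ofReal_eq_zero.mp h0
        have := abs_nonneg (f x)
        exact abs_eq_zero.mp (le_antisymm ‹|f x| ≤ 0› this)
      · exact absurd h0 ENNReal.ofReal_ne_top
    have hbz : besov μ κ q α (fun x => |f x| ^ (p / q)) = 0 := by
      refine le_antisymm (iSup_le fun t => ?_) zero_le
      have ht : 0 < t.1 := t.2
      have hDq : (∫⁻ y, ∫⁻ x, (ENNReal.ofReal |(|f x|) ^ (p / q) - (|f y|) ^ (p / q)|) ^ q
          ∂(κ t.1 y) ∂μ) = 0 := by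
        have hcongr : (∫⁻ y, ∫⁻ x, (ENNReal.ofReal |(|f x|) ^ (p / q) - (|f y|) ^ (p / q)|) ^ q
            ∂(κ t.1 y) ∂μ) = ∫⁻ y, ∫⁻ x, (ENNReal.ofReal |f x|) ^ p ∂(κ t.1 y) ∂μ := by
          refine lintegral_congr_ae ?_
          filter_upwards [hf0] with y hy
          refine lintegral_congr fun x => ?_
          rw [hy, abs_zero, Real.zero_rpow (by positivity : p / q ≠ 0), sub_zero,
            abs_of_nonneg (Real.rpow_nonneg (abs_nonneg _) _),
            ← ENNReal.ofReal_rpow_of_nonneg (abs_nonneg _) (by positivity : (0:ℝ) ≤ p / q),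
            ← ENNReal.rpow_mul, div_mul_cancel₀ _ hq0.ne']
        rw [hcongr, hsym t.1 ht (fun x _ => (ENNReal.ofReal |f x|) ^ p)
          (hu.comp measurable_fst)]
        have : ∀ x, ∫⁻ _, (ENNReal.ofReal |f x|) ^ p ∂(κ t.1 x) = (ENNReal.ofReal |f x|) ^ p := by
          intro x
          haveI := hκ t.1 x ht
          rw [lintegral_const, measure_univ, mul_one]
        rw [lintegral_congr this]
        exact hX0
      rw [hDq, ENNReal.zero_rpow_of_pos (by positivity : (0:ℝ) < 1 / q), mul_zero]
    rw [hbz]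
    exact zero_le
  rcases eq_or_lt_of_le hpq with rfl | hqp
  -- case p = q
  · have hFeq : (fun x => |f x| ^ (q / q)) = fun x => |f x| := by
      funext x
      rw [div_self hq0.ne', Real.rpow_one]
    rw [hFeq]
    have h1 : besov μ κ q α (fun x => |f x|) ≤ besov μ κ q α f := by
      refine iSup_le fun t => le_trans ?_ (le_iSup (fun t : Ioi (0:ℝ) =>
        (ENNReal.ofReal t.1) ^ (-α) *
          (∫⁻ y, ∫⁻ x, (ENNReal.ofReal |f x - f y|) ^ q ∂(κ t.1 y) ∂μ) ^ (1 / q)) t)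
      refine mul_le_mul_right (ENNReal.rpow_le_rpow ?_ (by positivity)) _
      refine lintegral_mono fun y => lintegral_mono fun x => ?_
      exact ENNReal.rpow_le_rpow
        (ENNReal.ofReal_le_ofReal (abs_abs_sub_abs_le_abs_sub _ _)) hq0.le
    refine h1.trans ?_
    have h2 : (1:ℝ≥0∞) ≤ ENNReal.ofReal (2 ^ (1 / q) * (q / q)) *
        (∫⁻ x, (ENNReal.ofReal |f x|) ^ q ∂μ) ^ ((q / q - 1) / q) := by
      rw [div_self hq0.ne', mul_one, sub_self, zero_div, ENNReal.rpow_zero, mul_one]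
      rw [ENNReal.one_le_ofReal]
      calc (1:ℝ) = 2 ^ (0:ℝ) := by simp
      _ ≤ 2 ^ (1/q) := Real.rpow_le_rpow_of_exponent_le one_le_two (by positivity)
    calc besov μ κ q α f = 1 * besov μ κ q α f := (one_mul _).symm
    _ ≤ _ := mul_le_mul_left h2 _
  -- main case q < p
  · set r : ℝ := p / (p - q) with hrdef
    set s : ℝ := p / q with hsdef
    have hpq0 : (0:ℝ) < p - q := by linarith
    have hconj : Real.HolderConjugate r s := Lconj hq hqp
    have hr1 : 1 < r := hconj.lt
    have hs1 : 1 < s := (one_lt_div hq0).2 hqp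
    have hrs_sum : 1/r + 1/s = 1 := by
      rw [one_div, one_div]
      exact hconj.inv_add_inv_eq_one
    set Lp : ℝ≥0∞ := ∫⁻ x, (ENNReal.ofReal |f x|) ^ p ∂μ with hLpdef
    refine iSup_le fun t => ?_
    have ht : 0 < t.1 := t.2
    haveI : ∀ x : X, IsProbabilityMeasure (κ t.1 x) := fun x => hκ t.1 x ht
    set Dp : ℝ≥0∞ := ∫⁻ y, ∫⁻ x, (ENNReal.ofReal |f x - f y|) ^ p ∂(κ t.1 y) ∂μ with hDpdef
    set Dq : ℝ≥0∞ := ∫⁻ y, ∫⁻ x,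
      (ENNReal.ofReal |(|f x|) ^ (p / q) - (|f y|) ^ (p / q)|) ^ q ∂(κ t.1 y) ∂μ with hDqdef
    have hDp_le : (ENNReal.ofReal t.1) ^ (-α) * Dp ^ (1 / p) ≤ besov μ κ p α f :=
      le_iSup (fun t : Ioi (0:ℝ) => (ENNReal.ofReal t.1) ^ (-α) *
        (∫⁻ y, ∫⁻ x, (ENNReal.ofReal |f x - f y|) ^ p ∂(κ t.1 y) ∂μ) ^ (1 / p)) t
    have hot0 : ENNReal.ofReal t.1 ≠ 0 := by
      simp [ENNReal.ofReal_eq_zero, not_le, ht]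
    have htne0 : (ENNReal.ofReal t.1) ^ (-α) ≠ 0 := by
      simp [ENNReal.rpow_eq_zero_iff, hot0]
    have hDp_ne_top : Dp ≠ ⊤ := by
      intro htop
      apply hfB
      refine top_le_iff.mp (le_trans (le_of_eq ?_) hDp_le)
      rw [htop, ENNReal.top_rpow_of_pos (by positivity : (0:ℝ) < 1 / p),
        ENNReal.mul_top htne0]
    have hhm : Measurable (Function.uncurry fun x y => (ENNReal.ofReal |f x - f y|) ^ p) :=
      (hrpmeas p).comp (((hf.comp measurable_fst).sub (hf.comp measurable_snd)).abs.ennreal_ofReal)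
    -- the family of bounds coming from the scaled Young inequality
    have hbound : ∀ D : ℝ≥0∞, D ≠ 0 → D ≠ ⊤ →
        Dq ≤ ENNReal.ofReal ((p / q) ^ q) *
          (2 * ((D ^ r * (ENNReal.ofReal r)⁻¹) * Lp + (D ^ s * ENNReal.ofReal s)⁻¹ * Dp)) := by
      intro D hD0 hDt
      have hzne : (D ^ s * ENNReal.ofReal s)⁻¹ ≠ ⊤ := by
        rw [ENNReal.inv_ne_top]
        apply mul_ne_zero
        · simp [ENNReal.rpow_eq_zero_iff, hD0, hDt]
        · exact (ENNReal.ofReal_pos.mpr (by linarith : (0:ℝ) < s)).ne'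
      have hbne : (2 : ℝ≥0∞) * (D ^ s * ENNReal.ofReal s)⁻¹ ≠ ⊤ :=
        ENNReal.mul_ne_top (by simp) hzne
      have step1 : Dq ≤ ∫⁻ y, ∫⁻ x, ENNReal.ofReal ((p / q) ^ q) *
          ((D ^ r * (ENNReal.ofReal r)⁻¹) * (ENNReal.ofReal |f x|) ^ p
            + ((D ^ r * (ENNReal.ofReal r)⁻¹) * (ENNReal.ofReal |f y|) ^ p
              + (2 * (D ^ s * ENNReal.ofReal s)⁻¹) * (ENNReal.ofReal |f x - f y|) ^ p))
          ∂(κ t.1 y) ∂μ := by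
        rw [hDqdef]
        exact lintegral_mono fun y => lintegral_mono fun x => L7 hq hqp D hD0 hDt (f x) (f y)
      have step2 : (∫⁻ y, ∫⁻ x, ENNReal.ofReal ((p / q) ^ q) *
          ((D ^ r * (ENNReal.ofReal r)⁻¹) * (ENNReal.ofReal |f x|) ^ p
            + ((D ^ r * (ENNReal.ofReal r)⁻¹) * (ENNReal.ofReal |f y|) ^ p
              + (2 * (D ^ s * ENNReal.ofReal s)⁻¹) * (ENNReal.ofReal |f x - f y|) ^ p))
          ∂(κ t.1 y) ∂μ)
          = ENNReal.ofReal ((p / q) ^ q) * ∫⁻ y, ∫⁻ x,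
          ((D ^ r * (ENNReal.ofReal r)⁻¹) * (ENNReal.ofReal |f x|) ^ p
            + ((D ^ r * (ENNReal.ofReal r)⁻¹) * (ENNReal.ofReal |f y|) ^ p
              + (2 * (D ^ s * ENNReal.ofReal s)⁻¹) * (ENNReal.ofReal |f x - f y|) ^ p))
          ∂(κ t.1 y) ∂μ := by
        rw [← lintegral_const_mul' _ _ ENNReal.ofReal_ne_top]
        exact lintegral_congr fun y => lintegral_const_mul' _ _ ENNReal.ofReal_ne_top
      have step3 : (∫⁻ y, ∫⁻ x,
          ((D ^ r * (ENNReal.ofReal r)⁻¹) * (ENNReal.ofReal |f x|) ^ p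
            + ((D ^ r * (ENNReal.ofReal r)⁻¹) * (ENNReal.ofReal |f y|) ^ p
              + (2 * (D ^ s * ENNReal.ofReal s)⁻¹) * (ENNReal.ofReal |f x - f y|) ^ p))
          ∂(κ t.1 y) ∂μ)
          = (D ^ r * (ENNReal.ofReal r)⁻¹) * Lp + ((D ^ r * (ENNReal.ofReal r)⁻¹) * Lp
            + (2 * (D ^ s * ENNReal.ofReal s)⁻¹) * Dp) := by
        rw [Lker μ κ t.1 (fun x => hκ t.1 x ht) (hsym t.1 ht)
          (fun x => (ENNReal.ofReal |f x|) ^ p) hu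
          (fun x y => (ENNReal.ofReal |f x - f y|) ^ p) hhm
          (fun x y => by
            show (ENNReal.ofReal |f x - f y|) ^ p = (ENNReal.ofReal |f y - f x|) ^ p
            rw [abs_sub_comm]) _ _ hbne, ← hLpdef, ← hDpdef]
      refine step1.trans (le_of_eq ?_)
      rw [step2, step3]
      ring
    by_cases hY0 : Dp = 0
    · -- degenerate time: both sides vanish
      have hKt : ENNReal.ofReal ((p / q) ^ q) * (2 * ((ENNReal.ofReal r)⁻¹ * Lp)) ≠ ⊤ := by
        refine ENNReal.mul_ne_top ENNReal.ofReal_ne_top (ENNReal.mul_ne_top (by simp)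
          (ENNReal.mul_ne_top ?_ hfLp))
        rw [ENNReal.inv_ne_top]
        exact (ENNReal.ofReal_pos.mpr (by linarith : (0:ℝ) < r)).ne'
      have hDq0 : Dq = 0 := by
        refine Lzero (by linarith : (0:ℝ) < r) _ hKt Dq fun D hD0 hDt => ?_
        refine (hbound D hD0 hDt).trans (le_of_eq ?_)
        rw [hY0]
        ring
      rw [hDq0, ENNReal.zero_rpow_of_pos (by positivity : (0:ℝ) < 1 / q), mul_zero]
      exact zero_le
    · obtain ⟨D, hD0, hDt, hopt⟩ := Lopt hr1 hs1 hrs_sum Lp Dp hX0 hfLp hY0 hDp_ne_top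
      have hDq_le : Dq ≤ ENNReal.ofReal ((p / q) ^ q) * (2 * (Lp ^ (1/r) * Dp ^ (1/s))) := by
        rw [← hopt]
        exact hbound D hD0 hDt
      have h0q : (0:ℝ) ≤ 1 / q := by positivity
      have hsplit : (ENNReal.ofReal ((p / q) ^ q) * (2 * (Lp ^ (1/r) * Dp ^ (1/s)))) ^ (1/q)
          = ENNReal.ofReal (2 ^ (1 / q) * (p / q)) * Lp ^ ((p / q - 1) / p) * Dp ^ (1 / p) := by
        have h1 : (ENNReal.ofReal ((p / q) ^ q)) ^ (1/q) = ENNReal.ofReal (p / q) := by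
          rw [← ENNReal.ofReal_rpow_of_nonneg (div_nonneg hp0.le hq0.le) hq0.le,
            ← ENNReal.rpow_mul, mul_one_div_cancel hq0.ne', ENNReal.rpow_one]
        have h2 : ((2:ℝ≥0∞)) ^ (1/q) = ENNReal.ofReal (2 ^ (1/q)) := by
          rw [show (2:ℝ≥0∞) = ENNReal.ofReal 2 by simp,
            ENNReal.ofReal_rpow_of_nonneg (by norm_num) h0q]
        have h3 : (Lp ^ (1/r)) ^ (1/q) = Lp ^ ((p / q - 1) / p) := by
          rw [← ENNReal.rpow_mul]
          congr 1
          rw [hrdef, one_div_div, div_sub_one hq0.ne', div_div, div_mul_div_comm, mul_one,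
            mul_comm p q]
        have h4 : (Dp ^ (1/s)) ^ (1/q) = Dp ^ (1 / p) := by
          rw [← ENNReal.rpow_mul]
          congr 1
          rw [hsdef]
          field_simp
        calc (ENNReal.ofReal ((p / q) ^ q) * (2 * (Lp ^ (1/r) * Dp ^ (1/s)))) ^ (1/q)
            = (ENNReal.ofReal ((p / q) ^ q)) ^ (1/q) *
              ((2:ℝ≥0∞) ^ (1/q) * ((Lp ^ (1/r)) ^ (1/q) * (Dp ^ (1/s)) ^ (1/q))) := by
              rw [ENNReal.mul_rpow_of_nonneg _ _ h0q, ENNReal.mul_rpow_of_nonneg _ _ h0q,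
                ENNReal.mul_rpow_of_nonneg _ _ h0q]
        _ = ENNReal.ofReal (p / q) * (ENNReal.ofReal (2 ^ (1/q)) *
              (Lp ^ ((p / q - 1) / p) * Dp ^ (1 / p))) := by rw [h1, h2, h3, h4]
        _ = ENNReal.ofReal (2 ^ (1 / q) * (p / q)) * Lp ^ ((p / q - 1) / p) * Dp ^ (1 / p) := by
              rw [ENNReal.ofReal_mul (by positivity : (0:ℝ) ≤ 2 ^ (1/q))]
              ring
      have fin1 : (ENNReal.ofReal t.1) ^ (-α) * Dq ^ (1/q)
          ≤ (ENNReal.ofReal t.1) ^ (-α) *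
            (ENNReal.ofReal ((p / q) ^ q) * (2 * (Lp ^ (1/r) * Dp ^ (1/s)))) ^ (1/q) :=
        mul_le_mul_right (ENNReal.rpow_le_rpow hDq_le h0q) _
      have fin2 : (ENNReal.ofReal t.1) ^ (-α) *
            (ENNReal.ofReal ((p / q) ^ q) * (2 * (Lp ^ (1/r) * Dp ^ (1/s)))) ^ (1/q)
          = ENNReal.ofReal (2 ^ (1 / q) * (p / q)) * Lp ^ ((p / q - 1) / p) *
            ((ENNReal.ofReal t.1) ^ (-α) * Dp ^ (1 / p)) := by
        rw [hsplit]; ring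
      refine (fin1.trans (le_of_eq fin2)).trans ?_
      exact mul_le_mul_right hDp_le _
end

section
/- (Pseudo-Poincaré inequality) Let {P_t} be a conservative Markovian semigroup on (X,μ), p ≥ 1, α > 0. For every f with ‖f‖_{p,α} < ∞ and every t ≥ 0, ‖P_t f − f‖_{L^p(X,μ)} ≤ t^α ‖f‖_{p,α}. -/
open MeasureTheory Set Filter ENNReal

/-- Pseudo-Poincaré inequality: for a conservative Markovian semigroup (with P_0 = Id),
p ≥ 1, α > 0, and f with finite Besov (p,α)-seminorm,
‖P_t f - f‖_{L^p} ≤ t^α ‖f‖_{p,α} for every t ≥ 0. -/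
theorem stmt8 {X : Type*} [MeasurableSpace X] (μ : Measure X)
    (κ : ℝ → X → Measure X) (p α : ℝ) (hp : 1 ≤ p) (hα : 0 < α)
    (hκ : ∀ t x, 0 < t → IsProbabilityMeasure (κ t x))
    (hκ0 : ∀ x, κ 0 x = Measure.dirac x)
    (f : X → ℝ) (hf : Measurable f)
    (hint : ∀ t, 0 < t → ∀ y, Integrable f (κ t y))
    (hfB : besov μ κ p α f ≠ ⊤) :
    ∀ t : ℝ, 0 ≤ t →
      (∫⁻ y, (ENNReal.ofReal |(∫ x, f x ∂(κ t y)) - f y|) ^ p ∂μ) ^ (1 / p) ≤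
        (ENNReal.ofReal t) ^ α * besov μ κ p α f := by
  intro t ht
  have hp0 : (0:ℝ) < p := lt_of_lt_of_le one_pos hp
  rcases eq_or_lt_of_le ht with h0 | htpos
  · -- t = 0
    subst h0
    have : ∀ y, (∫ x, f x ∂(κ 0 y)) = f y := by
      intro y; rw [hκ0 y, integral_dirac' f y hf.stronglyMeasurable]
    simp only [this, sub_self, abs_zero, ENNReal.ofReal_zero,
      ENNReal.zero_rpow_of_pos hp0, lintegral_zero,
      ENNReal.zero_rpow_of_pos (by positivity : (0:ℝ) < 1/p)]
    exact zero_le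
  · -- t > 0
    have hprob : ∀ y, IsProbabilityMeasure (κ t y) := fun y => hκ t y htpos
    -- pointwise Jensen inequality
    have key : ∀ y, (ENNReal.ofReal |(∫ x, f x ∂(κ t y)) - f y|) ^ p ≤
        ∫⁻ x, (ENNReal.ofReal |f x - f y|) ^ p ∂(κ t y) := by
      intro y
      haveI := hprob y
      set ν := κ t y
      have hig : Integrable (fun x => f x - f y) ν :=
        (hint t htpos y).sub (integrable_const _)
      have heq : (∫ x, f x ∂ν) - f y = ∫ x, (f x - f y) ∂ν := by
        rw [integral_sub (hint t htpos y) (integrable_const _), integral_const,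
          probReal_univ, one_smul]
      rw [heq]
      -- |∫ g| ≤ ∫⁻ |g|
      have h1 : ENNReal.ofReal |∫ x, (f x - f y) ∂ν| ≤
          ∫⁻ x, ENNReal.ofReal |f x - f y| ∂ν := by
        calc ENNReal.ofReal |∫ x, (f x - f y) ∂ν|
            ≤ ENNReal.ofReal (∫ x, |f x - f y| ∂ν) := by
              apply ENNReal.ofReal_le_ofReal
              simpa [Real.norm_eq_abs] using norm_integral_le_integral_norm (fun x => f x - f y)
          _ = ∫⁻ x, ENNReal.ofReal |f x - f y| ∂ν := by
              rw [ofReal_integral_eq_lintegral_ofReal hig.abs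
                (Filter.Eventually.of_forall fun x => abs_nonneg _)]
      -- ∫⁻ |g| ≤ (∫⁻ |g|^p)^{1/p}  (exponent monotonicity for probability measures)
      have hsm : AEStronglyMeasurable (fun x => f x - f y) ν :=
        ((hf.sub measurable_const).stronglyMeasurable).aestronglyMeasurable
      have h2 : (∫⁻ x, ENNReal.ofReal |f x - f y| ∂ν) ≤
          (∫⁻ x, (ENNReal.ofReal |f x - f y|) ^ p ∂ν) ^ (1 / p) := by
        have := eLpNorm'_le_eLpNorm'_of_exponent_le (f := fun x => f x - f y)
          one_pos hp ν hsm
        simp only [eLpNorm'] at this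
        have hnorm : ∀ x, ‖f x - f y‖ₑ = ENNReal.ofReal |f x - f y| := by
          intro x
          rw [← ofReal_norm, Real.norm_eq_abs]
        simpa [hnorm, ENNReal.rpow_one] using this
      calc (ENNReal.ofReal |∫ x, (f x - f y) ∂ν|) ^ p
          ≤ ((∫⁻ x, (ENNReal.ofReal |f x - f y|) ^ p ∂ν) ^ (1 / p)) ^ p :=
            ENNReal.rpow_le_rpow (h1.trans h2) hp0.le
        _ = ∫⁻ x, (ENNReal.ofReal |f x - f y|) ^ p ∂ν := by
            rw [← ENNReal.rpow_mul, one_div_mul_cancel hp0.ne', ENNReal.rpow_one]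
    -- integrate over y and take 1/p power
    have hI : (∫⁻ y, (ENNReal.ofReal |(∫ x, f x ∂(κ t y)) - f y|) ^ p ∂μ) ^ (1 / p) ≤
        (∫⁻ y, ∫⁻ x, (ENNReal.ofReal |f x - f y|) ^ p ∂(κ t y) ∂μ) ^ (1 / p) :=
      ENNReal.rpow_le_rpow (lintegral_mono key) (by positivity)
    -- relate to the Besov seminorm
    have hB : (ENNReal.ofReal t) ^ (-α) *
        (∫⁻ y, ∫⁻ x, (ENNReal.ofReal |f x - f y|) ^ p ∂(κ t y) ∂μ) ^ (1 / p) ≤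
        besov μ κ p α f := le_iSup_of_le (⟨t, htpos⟩ : Ioi (0:ℝ)) le_rfl
    have ht0 : ENNReal.ofReal t ≠ 0 := by
      simp [ENNReal.ofReal_eq_zero, not_le, htpos]
    have htne : ENNReal.ofReal t ≠ ⊤ := ENNReal.ofReal_ne_top
    calc (∫⁻ y, (ENNReal.ofReal |(∫ x, f x ∂(κ t y)) - f y|) ^ p ∂μ) ^ (1 / p)
        ≤ (∫⁻ y, ∫⁻ x, (ENNReal.ofReal |f x - f y|) ^ p ∂(κ t y) ∂μ) ^ (1 / p) := hI
      _ = (ENNReal.ofReal t) ^ α * ((ENNReal.ofReal t) ^ (-α) *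
            (∫⁻ y, ∫⁻ x, (ENNReal.ofReal |f x - f y|) ^ p ∂(κ t y) ∂μ) ^ (1 / p)) := by
          rw [← mul_assoc, ← ENNReal.rpow_add _ _ ht0 htne]
          simp
      _ ≤ (ENNReal.ofReal t) ^ α * besov μ κ p α f :=
          mul_le_mul_right hB _
end

section
/- Let {P_t} be a strongly continuous semigroup of contractions on L^p(X,μ) with generator L, 1 < p < ∞, which is analytic so that ‖L P_t f‖_{L^p} ≤ (C/t)‖f‖_{L^p}, and suppose additionally that ‖P_t f − f‖_{L^p} ≤ C' t^α ‖f‖ for all f in a subspace B with seminorm ‖·‖ and some 0 < α < 1. Then for every f ∈ B and t > 0, ‖L P_t f‖_{L^p} ≤ C'' t^{α−1} ‖f‖ with a constant C'' depending only on C, C', α. -/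
/-!
Write `a n = L P_{2^n t} f`. Since `L P_{2s} = L P_s ∘ P_s`, consecutive terms differ by
`L P_s (f - P_s f)` with `s = 2^n t`, which analyticity and the pseudo-Poincaré bound make
at most `C C' s^(α-1) N(f) = C C' t^(α-1) N(f) · (2^(α-1))^n`. As `α < 1` this is geometric,
and `a n → 0` by analyticity, so `‖a 0‖` is bounded by the sum of the geometric series.
-/

open Filter Topology

section AnalyticSemigroup

variable {E : Type*} [NormedAddCommGroup E] [NormedSpace ℝ E]
  {P A : ℝ → E →L[ℝ] E} {C : ℝ}

theorem tendsto_apply_atTop_nhds_zero_of_norm_le_div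
    (hA : ∀ t : ℝ, 0 < t → ∀ f : E, ‖A t f‖ ≤ C / t * ‖f‖) (f : E) :
    Tendsto (fun t => A t f) atTop (𝓝 0) := by
  have hbound : Tendsto (fun t : ℝ => C / t * ‖f‖) atTop (𝓝 0) := by
    simpa using (tendsto_const_nhds.div_atTop tendsto_id).mul_const ‖f‖
  refine squeeze_zero_norm' ?_ hbound
  filter_upwards [eventually_gt_atTop 0] with t ht using hA t ht f

theorem norm_apply_sub_apply_add_self_le
    (hA : ∀ t : ℝ, 0 < t → ∀ f : E, ‖A t f‖ ≤ C / t * ‖f‖)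
    (hcomm : ∀ s : ℝ, 0 < s → ∀ t : ℝ, 0 < t → A (s + t) = (A s).comp (P t))
    (hC : 0 ≤ C) {C' α K s : ℝ} (hs : 0 < s) {f : E} (hf : ‖P s f - f‖ ≤ C' * s ^ α * K) :
    ‖A s f - A (s + s) f‖ ≤ C * C' * s ^ (α - 1) * K := by
  have hdiff : A s f - A (s + s) f = A s (f - P s f) := by
    rw [hcomm s hs s hs, ContinuousLinearMap.comp_apply, map_sub]
  calc ‖A s f - A (s + s) f‖
      ≤ C / s * ‖P s f - f‖ := by rw [hdiff, norm_sub_rev (P s f)]; exact hA s hs _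
    _ ≤ C / s * (C' * s ^ α * K) := by gcongr
    _ = C * C' * s ^ (α - 1) * K := by
        rw [Real.rpow_sub hs, Real.rpow_one]; ring

theorem rpow_two_pow_mul (n : ℕ) {t : ℝ} (ht : 0 ≤ t) (β : ℝ) :
    ((2 : ℝ) ^ n * t) ^ β = ((2 : ℝ) ^ β) ^ n * t ^ β := by
  rw [Real.mul_rpow (by positivity) ht, ← Real.rpow_natCast_mul zero_le_two, mul_comm (n : ℝ),
    Real.rpow_mul_natCast zero_le_two]

theorem norm_apply_two_pow_mul_sub_le
    (hA : ∀ t : ℝ, 0 < t → ∀ f : E, ‖A t f‖ ≤ C / t * ‖f‖)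
    (hcomm : ∀ s : ℝ, 0 < s → ∀ t : ℝ, 0 < t → A (s + t) = (A s).comp (P t))
    (hC : 0 ≤ C) {C' α K t : ℝ} (ht : 0 < t) {f : E}
    (hf : ∀ s : ℝ, 0 < s → ‖P s f - f‖ ≤ C' * s ^ α * K) (n : ℕ) :
    ‖A (2 ^ n * t) f - A (2 ^ (n + 1) * t) f‖ ≤
      C * C' * t ^ (α - 1) * K * ((2 : ℝ) ^ (α - 1)) ^ n := by
  have hs : (0 : ℝ) < 2 ^ n * t := by positivity
  have hdouble : (2 : ℝ) ^ (n + 1) * t = 2 ^ n * t + 2 ^ n * t := by ring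
  calc ‖A (2 ^ n * t) f - A (2 ^ (n + 1) * t) f‖
      ≤ C * C' * (2 ^ n * t) ^ (α - 1) * K := by
        rw [hdouble]; exact norm_apply_sub_apply_add_self_le hA hcomm hC hs (hf _ hs)
    _ = C * C' * t ^ (α - 1) * K * ((2 : ℝ) ^ (α - 1)) ^ n := by
        rw [rpow_two_pow_mul n ht.le]; ring

end AnalyticSemigroup

theorem stmt9_general {E : Type*} [NormedAddCommGroup E] [NormedSpace ℝ E]
    (P A : ℝ → E →L[ℝ] E) (C C' α : ℝ) (hC : 0 < C) (hC' : 0 < C')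
    (hα1 : α < 1)
    (hA : ∀ t : ℝ, 0 < t → ∀ f : E, ‖A t f‖ ≤ C / t * ‖f‖)
    (hcomm : ∀ s : ℝ, 0 < s → ∀ t : ℝ, 0 < t → A (s + t) = (A s).comp (P t))
    (S : Submodule ℝ E) (N : E → ℝ)
    (hPP : ∀ f ∈ S, ∀ t : ℝ, 0 < t → ‖P t f - f‖ ≤ C' * t ^ α * N f) :
    ∃ C'' : ℝ, 0 < C'' ∧ ∀ f ∈ S, ∀ t : ℝ, 0 < t →
      ‖A t f‖ ≤ C'' * t ^ (α - 1) * N f := by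
  set r : ℝ := (2 : ℝ) ^ (α - 1)
  have hr : r < 1 := Real.rpow_lt_one_of_one_lt_of_neg one_lt_two (by linarith)
  refine ⟨C * C' / (1 - r), div_pos (by positivity) (by linarith), fun f hf t ht => ?_⟩
  have hlim : Tendsto (fun n : ℕ => A (2 ^ n * t) f) atTop (𝓝 0) :=
    (tendsto_apply_atTop_nhds_zero_of_norm_le_div hA f).comp
      (tendsto_pow_atTop_atTop_of_one_lt one_lt_two |>.atTop_mul_const ht)
  have hgeom := dist_le_of_le_geometric_of_tendsto₀ r _ hr
    (fun n => (dist_eq_norm _ _).trans_le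
      (norm_apply_two_pow_mul_sub_le hA hcomm hC.le ht (hPP f hf) n)) hlim
  simp only [pow_zero, one_mul, dist_zero_right] at hgeom
  calc ‖A t f‖ ≤ C * C' * t ^ (α - 1) * N f / (1 - r) := hgeom
    _ = C * C' / (1 - r) * t ^ (α - 1) * N f := by ring

/-- If `P_t` is a strongly continuous contraction semigroup with generator `L` on a
Banach space (here `A t = L ∘ P_t`, with the semigroup relation
`L P_{s+t} = (L P_s) ∘ P_t` and the analyticity bound `‖L P_t f‖ ≤ (C/t)‖f‖`), and if
the pseudo-Poincaré bound `‖P_t f − f‖ ≤ C' t^α N(f)` holds on a subspace `S` with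
seminorm `N` for some `0 < α < 1`, then there is `C'' > 0` (depending only on
`C, C', α`) with `‖L P_t f‖ ≤ C'' t^{α−1} N(f)` for all `f ∈ S`, `t > 0`. -/
theorem stmt9 {E : Type*} [NormedAddCommGroup E] [NormedSpace ℝ E]
    (P A : ℝ → E →L[ℝ] E) (C C' α : ℝ) (hC : 0 < C) (hC' : 0 < C')
    (hα0 : 0 < α) (hα1 : α < 1)
    (hcontr : ∀ t : ℝ, 0 < t → ∀ f : E, ‖P t f‖ ≤ ‖f‖)
    (hA : ∀ t : ℝ, 0 < t → ∀ f : E, ‖A t f‖ ≤ C / t * ‖f‖)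
    (hcomm : ∀ s : ℝ, 0 < s → ∀ t : ℝ, 0 < t → A (s + t) = (A s).comp (P t))
    (S : Submodule ℝ E) (N : E → ℝ) (hN : ∀ f, 0 ≤ N f)
    (hPP : ∀ f ∈ S, ∀ t : ℝ, 0 < t → ‖P t f - f‖ ≤ C' * t ^ α * N f) :
    ∃ C'' : ℝ, 0 < C'' ∧ ∀ f ∈ S, ∀ t : ℝ, 0 < t →
      ‖A t f‖ ≤ C'' * t ^ (α - 1) * N f :=
  stmt9_general P A C C' α hC hC' hα1 hA hcomm S N hPP
end

section
/- Let {P_t} be a strongly continuous contraction semigroup on L^p(X,μ) with generator L, and let 0 < s < α ≤ 1, p ≥ 1. Suppose f ∈ L^p satisfies the pseudo-Poincaré bound ‖P_t f − f‖_{L^p} ≤ t^α N(f) for all t > 0, where N(f) < ∞. Then the Bochner integral ∫_0^∞ t^{−s−1}(P_t f − f) dt converges absolutely in L^p, and its L^p norm is bounded by (2^{2−s/α}/(s^{1−s/α}(α−s)^{s/α})) · ‖f‖_{L^p}^{1−s/α} · N(f)^{s/α} · (1/1) (up to the normalizing factor Γ(1−s)/s defining (−L)^s f). In particular ‖(−L)^s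 f‖_{L^p} ≤ C_{s,α} ‖f‖_{L^p}^{1−s/α} N(f)^{s/α}. -/
/-!
Split the subordination integral at `δ > 0`. On `(0, δ]` the pseudo-Poincaré bound gives
`∫ t^{-s-1} ‖P_t f - f‖ ≤ N δ^{α-s}/(α-s)`; on `(δ, ∞)` contractivity gives
`‖P_t f - f‖ ≤ 2‖f‖`, hence a contribution `≤ 2‖f‖ δ^{-s}/s`. The choice
`δ^α = 2‖f‖(α-s)/(sN)` makes the two contributions equal, and their sum is the stated bound.
-/

open MeasureTheory Set Real

lemma integrableOn_Ioc_zero_rpow {r : ℝ} (hr : -1 < r) (δ : ℝ) :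
    IntegrableOn (fun t : ℝ => t ^ r) (Ioc 0 δ) :=
  (intervalIntegral.intervalIntegrable_rpow' hr).1

lemma setIntegral_Ioc_zero_rpow {r δ : ℝ} (hr : -1 < r) (hδ : 0 ≤ δ) :
    ∫ t in Ioc 0 δ, t ^ r = δ ^ (r + 1) / (r + 1) := by
  rw [← intervalIntegral.integral_of_le hδ, integral_rpow (Or.inl hr),
    zero_rpow (by linarith), sub_zero]

lemma integrableOn_and_setIntegral_norm_le_of_norm_le {X E : Type*} [MeasurableSpace X]
    [NormedAddCommGroup E] {μ : Measure X} {S : Set X} {g : X → E}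
    {h : X → ℝ} (hS : MeasurableSet S) (hg : AEStronglyMeasurable g (μ.restrict S))
    (hh : IntegrableOn h S μ) (hgh : ∀ x ∈ S, ‖g x‖ ≤ h x) :
    IntegrableOn g S μ ∧ ∫ x in S, ‖g x‖ ∂μ ≤ ∫ x in S, h x ∂μ := by
  have hint : IntegrableOn g S μ :=
    hh.mono' hg ((ae_restrict_mem hS).mono hgh)
  exact ⟨hint, setIntegral_mono_on hint.norm hh hS hgh⟩

lemma exists_pos_balanced_split {s α M N : ℝ} (hs : 0 < s) (hsα : s < α) (hM : 0 < M)
    (hN : 0 < N) : ∃ δ > 0, N * (δ ^ (α - s) / (α - s)) + M * (δ ^ (-s) / s) =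
      2 * M ^ (1 - s / α) * N ^ (s / α) / (s ^ (1 - s / α) * (α - s) ^ (s / α)) := by
  have hα : 0 < α := hs.trans hsα
  have hαs : 0 < α - s := sub_pos.mpr hsα
  set A := M * (α - s) / (s * N) with hA_def
  have hA : 0 < A := by positivity
  set β := s / α
  -- `δ ^ α = A` balances the two terms: both equal `M * δ ^ (-s) / s`.
  refine ⟨A ^ (1 / α), by positivity, ?_⟩
  have hpow : ∀ r, (A ^ (1 / α)) ^ r = A ^ (r / α) := fun r => by
    rw [← rpow_mul hA.le, one_div_mul_eq_div]
  have hAβ : A ^ β = M ^ β * (α - s) ^ β / (s ^ β * N ^ β) := by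
    rw [hA_def, div_rpow (by positivity) (by positivity), mul_rpow hM.le hαs.le,
      mul_rpow hs.le hN.le]
  rw [hpow, hpow, show (α - s) / α = 1 - β by rw [sub_div, div_self hα.ne'],
    show -s / α = -β by ring, rpow_sub hA, rpow_one, rpow_neg hA.le, hAβ, rpow_sub hM,
    rpow_sub hs, rpow_one, rpow_one, hA_def]
  field_simp
  ring

section Subordination

variable {E : Type*} [NormedAddCommGroup E] [NormedSpace ℝ E] {u : ℝ → E} {s α N M δ : ℝ}

lemma aestronglyMeasurable_rpow_smul (hu : ContinuousOn u (Ioi 0)) (r : ℝ) :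
    AEStronglyMeasurable (fun t : ℝ => t ^ r • u t) (volume.restrict (Ioi 0)) :=
  ((continuousOn_id.rpow_const fun _ ht => Or.inl (ne_of_gt ht)).smul hu).aestronglyMeasurable
    measurableSet_Ioi

lemma integrableOn_Ioc_rpow_smul_of_norm_le_rpow (hu : ContinuousOn u (Ioi 0)) (hsα : s < α)
    (hN : ∀ t, 0 < t → ‖u t‖ ≤ t ^ α * N) (hδ : 0 ≤ δ) :
    IntegrableOn (fun t => t ^ (-s - 1) • u t) (Ioc 0 δ) ∧
      ∫ t in Ioc 0 δ, ‖t ^ (-s - 1) • u t‖ ≤ N * (δ ^ (α - s) / (α - s)) := by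
  have hr : -1 < α - s - 1 := by linarith
  have key := integrableOn_and_setIntegral_norm_le_of_norm_le measurableSet_Ioc
    ((aestronglyMeasurable_rpow_smul hu _).mono_set Ioc_subset_Ioi_self)
    ((integrableOn_Ioc_zero_rpow hr δ).const_mul N) fun t ht => by
      rw [norm_smul_of_nonneg (rpow_nonneg ht.1.le _)]
      calc t ^ (-s - 1) * ‖u t‖ ≤ t ^ (-s - 1) * (t ^ α * N) :=
            mul_le_mul_of_nonneg_left (hN t ht.1) (rpow_nonneg ht.1.le _)
        _ = N * t ^ (α - s - 1) := by
            rw [show α - s - 1 = -s - 1 + α by ring, rpow_add ht.1]; ring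
  rwa [integral_const_mul, setIntegral_Ioc_zero_rpow hr hδ, sub_add_cancel] at key

lemma integrableOn_Ioi_rpow_smul_of_norm_le (hu : ContinuousOn u (Ioi 0)) (hs : 0 < s)
    (hM : ∀ t, 0 < t → ‖u t‖ ≤ M) (hδ : 0 < δ) :
    IntegrableOn (fun t => t ^ (-s - 1) • u t) (Ioi δ) ∧
      ∫ t in Ioi δ, ‖t ^ (-s - 1) • u t‖ ≤ M * (δ ^ (-s) / s) := by
  have hr : -s - 1 < -1 := by linarith
  have key := integrableOn_and_setIntegral_norm_le_of_norm_le measurableSet_Ioi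
    ((aestronglyMeasurable_rpow_smul hu _).mono_set (Ioi_subset_Ioi hδ.le))
    ((integrableOn_Ioi_rpow_of_lt hr hδ).const_mul M) fun t ht => by
      have ht0 : 0 < t := hδ.trans ht
      rw [norm_smul_of_nonneg (rpow_nonneg ht0.le _), mul_comm]
      exact mul_le_mul_of_nonneg_right (hM t ht0) (rpow_nonneg ht0.le _)
  rwa [integral_const_mul, integral_Ioi_rpow_of_lt hr hδ, sub_add_cancel, neg_div,
    div_neg, neg_neg] at key

lemma integrableOn_Ioi_rpow_smul_and_norm_integral_le_of_split (hu : ContinuousOn u (Ioi 0))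
    (hs : 0 < s) (hsα : s < α) (hN : ∀ t, 0 < t → ‖u t‖ ≤ t ^ α * N)
    (hM : ∀ t, 0 < t → ‖u t‖ ≤ M) (hδ : 0 < δ) :
    IntegrableOn (fun t => t ^ (-s - 1) • u t) (Ioi 0) ∧
      ‖∫ t in Ioi 0, t ^ (-s - 1) • u t‖ ≤
        N * (δ ^ (α - s) / (α - s)) + M * (δ ^ (-s) / s) := by
  obtain ⟨hint₀, hle₀⟩ := integrableOn_Ioc_rpow_smul_of_norm_le_rpow hu hsα hN hδ.le
  obtain ⟨hint₁, hle₁⟩ := integrableOn_Ioi_rpow_smul_of_norm_le hu hs hM hδ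
  rw [← Ioc_union_Ioi_eq_Ioi hδ.le]
  refine ⟨hint₀.union hint₁, (norm_integral_le_integral_norm _).trans ?_⟩
  rw [setIntegral_union (Ioc_disjoint_Ioi le_rfl) measurableSet_Ioi hint₀.norm hint₁.norm]
  exact add_le_add hle₀ hle₁

theorem integrableOn_Ioi_rpow_smul_and_norm_integral_le (hu : ContinuousOn u (Ioi 0))
    (hs : 0 < s) (hsα : s < α) (hN : ∀ t, 0 < t → ‖u t‖ ≤ t ^ α * N)
    (hM : ∀ t, 0 < t → ‖u t‖ ≤ M) :
    IntegrableOn (fun t => t ^ (-s - 1) • u t) (Ioi 0) ∧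
      ‖∫ t in Ioi 0, t ^ (-s - 1) • u t‖ ≤
        2 * M ^ (1 - s / α) * N ^ (s / α) / (s ^ (1 - s / α) * (α - s) ^ (s / α)) := by
  have hαs : 0 < α - s := sub_pos.mpr hsα
  have hM0 : 0 ≤ M := (norm_nonneg _).trans (hM 1 one_pos)
  have hN0 : 0 ≤ N := (norm_nonneg _).trans ((hN 1 one_pos).trans_eq (by rw [one_rpow, one_mul]))
  refine ⟨(integrableOn_Ioi_rpow_smul_and_norm_integral_le_of_split hu hs hsα hN hM
    one_pos).1, ?_⟩
  by_cases hdeg : M = 0 ∨ N = 0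
  · have hvanish : ∀ t ∈ Ioi (0 : ℝ), t ^ (-s - 1) • u t = 0 := fun t ht => by
      have hut : ‖u t‖ ≤ 0 := by
        rcases hdeg with rfl | rfl
        · exact hM t ht
        · simpa using hN t ht
      rw [norm_le_zero_iff.mp hut, smul_zero]
    rw [setIntegral_congr_fun measurableSet_Ioi hvanish, integral_zero, norm_zero]
    positivity
  obtain ⟨hM', hN'⟩ := not_or.mp hdeg
  obtain ⟨δ, hδ, hδeq⟩ :=
    exists_pos_balanced_split hs hsα (hM0.lt_of_ne' hM') (hN0.lt_of_ne' hN')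
  exact hδeq ▸ (integrableOn_Ioi_rpow_smul_and_norm_integral_le_of_split hu hs hsα hN hM hδ).2

end Subordination

theorem stmt10_general {E : Type*} [NormedAddCommGroup E] [NormedSpace ℝ E]
    (P : ℝ → E →L[ℝ] E) (s α : ℝ) (hs : 0 < s) (hsα : s < α)
    (f : E) (Nf : ℝ)
    (hcontr : ∀ t : ℝ, 0 < t → ‖P t f‖ ≤ ‖f‖)
    (hcont : ContinuousOn (fun t : ℝ => P t f) (Ioi 0))
    (hPP : ∀ t : ℝ, 0 < t → ‖P t f - f‖ ≤ t ^ α * Nf) :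
    IntegrableOn (fun t : ℝ => t ^ (-s - 1) • (P t f - f)) (Ioi 0) volume ∧
    ‖∫ t in Ioi (0 : ℝ), t ^ (-s - 1) • (P t f - f)‖ ≤
      2 ^ (2 - s / α) / (s ^ (1 - s / α) * (α - s) ^ (s / α)) *
        ‖f‖ ^ (1 - s / α) * Nf ^ (s / α) := by
  have hbound : ∀ t : ℝ, 0 < t → ‖P t f - f‖ ≤ 2 * ‖f‖ := fun t ht =>
    (norm_sub_le _ _).trans (by linarith [hcontr t ht])
  refine (integrableOn_Ioi_rpow_smul_and_norm_integral_le (hcont.sub continuousOn_const)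
    hs hsα hPP hbound).imp_right fun h => h.trans_eq ?_
  rw [mul_rpow zero_le_two (norm_nonneg f), show 2 - s / α = 1 + (1 - s / α) by ring,
    rpow_add two_pos, rpow_one]
  ring

/-- Bochner subordination bound for fractional powers: if `P_t` is a strongly continuous
contraction semigroup and `f` satisfies the pseudo-Poincaré bound
`‖P_t f − f‖ ≤ t^α N(f)` for all `t > 0`, with `0 < s < α ≤ 1`, then
`t ↦ t^{−s−1}(P_t f − f)` is Bochner integrable on `(0,∞)` and the norm of its integral
(which, up to the factor `Γ(1−s)/s`, is `‖(−L)^s f‖`) is bounded by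
`(2^{2−s/α}/(s^{1−s/α}(α−s)^{s/α})) ‖f‖^{1−s/α} N(f)^{s/α}`. -/
theorem stmt10 {E : Type*} [NormedAddCommGroup E] [NormedSpace ℝ E] [CompleteSpace E]
    (P : ℝ → E →L[ℝ] E) (s α : ℝ) (hs : 0 < s) (hsα : s < α) (hα : α ≤ 1)
    (f : E) (Nf : ℝ) (hNf : 0 ≤ Nf)
    (hcontr : ∀ t : ℝ, 0 < t → ‖P t f‖ ≤ ‖f‖)
    (hcont : ContinuousOn (fun t : ℝ => P t f) (Ioi 0))
    (hPP : ∀ t : ℝ, 0 < t → ‖P t f - f‖ ≤ t ^ α * Nf) :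
    IntegrableOn (fun t : ℝ => t ^ (-s - 1) • (P t f - f)) (Ioi 0) volume ∧
    ‖∫ t in Ioi (0 : ℝ), t ^ (-s - 1) • (P t f - f)‖ ≤
      2 ^ (2 - s / α) / (s ^ (1 - s / α) * (α - s) ^ (s / α)) *
        ‖f‖ ^ (1 - s / α) * Nf ^ (s / α) :=
  stmt10_general P s α hs hsα f Nf hcontr hcont hPP
end

section
/- For all real numbers α, β ≥ 0 and 1 < p ≤ 2, setting γ_p(α,β) = pα(α−β) − α^{2−p}(α^p − β^p), one has (p−1)(α−β)^2 ≤ γ_p(α,β) + γ_p(β,α) ≤ p(α−β)^2. -/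
/-!
The symmetrised quantity is `γ_p(a,b) + γ_p(b,a) = p (a-b)^2 - Q` with
`Q = (a^p - b^p)(a^(2-p) - b^(2-p))`. Both factors of `Q` move in the same direction, so `Q ≥ 0`.
Expanding, `Q = a^2 + b^2 - (a^p b^(2-p) + a^(2-p) b^p)`, and the two mixed terms have product
`(ab)^2`, so by AM-GM their sum is at least `2ab`, i.e. `Q ≤ (a-b)^2`.
-/

namespace Real

lemma rpow_mul_rpow_two_sub {a : ℝ} (ha : 0 ≤ a) (p : ℝ) : a ^ p * a ^ (2 - p) = a ^ 2 := by
  rw [← rpow_add' ha (by norm_num), add_sub_cancel, rpow_two]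

lemma two_mul_le_add_of_mul_eq_sq {x y c : ℝ} (hx : 0 ≤ x) (hy : 0 ≤ y) (hc : 0 ≤ c)
    (hxy : x * y = c ^ 2) : 2 * c ≤ x + y := by
  have hsqrt : √x * √y = c := by rw [← sqrt_mul hx, hxy, sqrt_sq hc]
  simpa [mul_assoc, hsqrt, sq_sqrt hx, sq_sqrt hy] using two_mul_le_add_sq √x √y

lemma two_mul_le_rpow_mul_rpow_two_sub_add {a b : ℝ} (ha : 0 ≤ a) (hb : 0 ≤ b) (p : ℝ) :
    2 * (a * b) ≤ a ^ p * b ^ (2 - p) + a ^ (2 - p) * b ^ p := by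
  refine two_mul_le_add_of_mul_eq_sq (by positivity) (by positivity) (mul_nonneg ha hb) ?_
  calc a ^ p * b ^ (2 - p) * (a ^ (2 - p) * b ^ p)
      = (a ^ p * a ^ (2 - p)) * (b ^ p * b ^ (2 - p)) := by ring
    _ = (a * b) ^ 2 := by rw [rpow_mul_rpow_two_sub ha, rpow_mul_rpow_two_sub hb, mul_pow]

lemma rpow_sub_rpow_mul_rpow_two_sub_sub_le_sq {a b : ℝ} (ha : 0 ≤ a) (hb : 0 ≤ b) (p : ℝ) :
    (a ^ p - b ^ p) * (a ^ (2 - p) - b ^ (2 - p)) ≤ (a - b) ^ 2 := by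
  have hA := rpow_mul_rpow_two_sub ha p
  have hB := rpow_mul_rpow_two_sub hb p
  nlinarith [two_mul_le_rpow_mul_rpow_two_sub_add ha hb p]

lemma rpow_sub_rpow_mul_rpow_sub_rpow_nonneg {a b p q : ℝ} (ha : 0 ≤ a) (hb : 0 ≤ b)
    (hp : 0 ≤ p) (hq : 0 ≤ q) : 0 ≤ (a ^ p - b ^ p) * (a ^ q - b ^ q) := by
  rcases le_total a b with hab | hba
  · exact mul_nonneg_of_nonpos_of_nonpos (sub_nonpos.2 (rpow_le_rpow ha hab hp))
      (sub_nonpos.2 (rpow_le_rpow ha hab hq))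
  · exact mul_nonneg (sub_nonneg.2 (rpow_le_rpow hb hba hp))
      (sub_nonneg.2 (rpow_le_rpow hb hba hq))

end Real

/-- For all reals `a, b ≥ 0` and `1 < p ≤ 2`, with
`γ_p(a,b) = p·a·(a-b) - a^(2-p)·(a^p - b^p)`, one has
`(p-1)(a-b)^2 ≤ γ_p(a,b) + γ_p(b,a) ≤ p(a-b)^2`. -/
theorem stmt11 (p a b : ℝ) (hp1 : 1 < p) (hp2 : p ≤ 2) (ha : 0 ≤ a) (hb : 0 ≤ b) :
    (p - 1) * (a - b) ^ 2 ≤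
        (p * a * (a - b) - a ^ (2 - p) * (a ^ p - b ^ p)) +
          (p * b * (b - a) - b ^ (2 - p) * (b ^ p - a ^ p)) ∧
      (p * a * (a - b) - a ^ (2 - p) * (a ^ p - b ^ p)) +
          (p * b * (b - a) - b ^ (2 - p) * (b ^ p - a ^ p)) ≤
        p * (a - b) ^ 2 := by
  have hsum : (p * a * (a - b) - a ^ (2 - p) * (a ^ p - b ^ p)) +
      (p * b * (b - a) - b ^ (2 - p) * (b ^ p - a ^ p)) =
      p * (a - b) ^ 2 - (a ^ p - b ^ p) * (a ^ (2 - p) - b ^ (2 - p)) := by ring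
  have hle := Real.rpow_sub_rpow_mul_rpow_two_sub_sub_le_sq ha hb p
  have hnonneg : 0 ≤ (a ^ p - b ^ p) * (a ^ (2 - p) - b ^ (2 - p)) :=
    Real.rpow_sub_rpow_mul_rpow_sub_rpow_nonneg ha hb (by linarith) (by linarith)
  rw [hsum]
  constructor <;> linarith
end
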